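/- Let X ∈ M_{n×p} have singular values σ_1 ≥ … ≥ σ_n, let ε > 0, let XX* = U Σ² U* be an eigendecomposition with Σ = diag(σ_1,…,σ_n), and set W = U Σ_ε^{−1} U* with Σ_ε = diag(max{σ_j, ε}). Then 𝒥(X,W) = ½(‖W^{1/2}X‖_F² + ‖W^{−1/2}‖_F²) = Σ_{i : σ_i ≥ ε} σ_i + Σ_{i : σ_i < ε} (σ_i² + ε²)/(2ε) = 𝒥_ε(X), where 𝒥_ε(X) = Σ_{i=1}^n j^ε(σ_i(X)) with j^ε(u) = |u| if |u| ≥ ε and j^ε(u) = (u² + ε²)/(2ε) if |u| < ε. -/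

import Mathlib

open Matrix
open scoped ComplexOrder

namespace IRLSM

/-- Frobenius inner product `⟨X,Y⟩ = Tr(X Yᴴ)`. -/
noncomputable def frobInner {n p : ℕ} (X Y : Matrix (Fin n) (Fin p) ℂ) : ℂ :=
  Matrix.trace (X * Yᴴ)

/-- Frobenius norm. -/
noncomputable def frobNorm {n p : ℕ} (X : Matrix (Fin n) (Fin p) ℂ) : ℝ :=
  Real.sqrt (∑ i, ∑ j, Complex.normSq (X i j))

/-- Singular values of `X` in nonincreasing order, `sv X 0 = σ₁ ≥ sv X 1 = σ₂ ≥ …`;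
indices `≥ n` give `0`. -/
noncomputable def sv {n p : ℕ} (X : Matrix (Fin n) (Fin p) ℂ) : ℕ → ℝ :=
  fun i => ((List.ofFn fun j : Fin n =>
      Real.sqrt ((Matrix.isHermitian_mul_conjTranspose_self X).eigenvalues j)).mergeSort
      (fun a b => decide (b ≤ a))).getD i 0

/-- Nuclear norm `‖X‖_* = ∑ σᵢ(X)`. -/
noncomputable def nuclearNorm {n p : ℕ} (X : Matrix (Fin n) (Fin p) ℂ) : ℝ :=
  ∑ i : Fin n, sv X (i : ℕ)

/-- Positive square root of a positive semidefinite matrix (junk value `0` otherwise). -/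
noncomputable def matSqrt {n : ℕ} (W : Matrix (Fin n) (Fin n) ℂ) : Matrix (Fin n) (Fin n) ℂ :=
  @dite _ W.PosSemidef (Classical.dec _) (fun h => (h.1.eigenvectorUnitary : Matrix (Fin n) (Fin n) ℂ) *
    Matrix.diagonal (fun i => ((Real.sqrt (h.1.eigenvalues i) : ℝ) : ℂ)) *
    (star h.1.eigenvectorUnitary : Matrix (Fin n) (Fin n) ℂ)) (fun _ => 0)

/-- The functional `𝒥(X,W) = ½(‖W^{1/2}X‖_F² + ‖W^{-1/2}‖_F²)`. -/
noncomputable def Jfun {n p : ℕ} (X : Matrix (Fin n) (Fin p) ℂ)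
    (W : Matrix (Fin n) (Fin n) ℂ) : ℝ :=
  (frobNorm (matSqrt W * X) ^ 2 + frobNorm (matSqrt W⁻¹) ^ 2) / 2

/-- The restricted isometry constant `δ_k(𝒮)`: the smallest `δ ≥ 0` such that
`(1-δ)‖X‖_F² ≤ ‖𝒮(X)‖² ≤ (1+δ)‖X‖_F²` for all `X` of rank at most `k`. -/
noncomputable def ripConst {n p m : ℕ}
    (S : Matrix (Fin n) (Fin p) ℂ →ₗ[ℂ] (Fin m → ℂ)) (k : ℕ) : ℝ :=
  sInf {δ : ℝ | 0 ≤ δ ∧ ∀ X : Matrix (Fin n) (Fin p) ℂ, X.rank ≤ k →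
    (1 - δ) * frobNorm X ^ 2 ≤ ∑ i, Complex.normSq (S X i) ∧
      ∑ i, Complex.normSq (S X i) ≤ (1 + δ) * frobNorm X ^ 2}

/-- The rank null space property of order `k`. -/
def RNSP {n p m : ℕ} (S : Matrix (Fin n) (Fin p) ℂ →ₗ[ℂ] (Fin m → ℂ)) (k : ℕ) : Prop :=
  ∀ H : Matrix (Fin n) (Fin p) ℂ, S H = 0 → H ≠ 0 →
    ∀ H₁ H₂ : Matrix (Fin n) (Fin p) ℂ, H = H₁ + H₂ → H₁.rank ≤ k →
      nuclearNorm H₁ < nuclearNorm H₂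

/-- The strong rank null space property of order `k` with constant `η`. -/
def SRNSP {n p m : ℕ} (S : Matrix (Fin n) (Fin p) ℂ →ₗ[ℂ] (Fin m → ℂ)) (k : ℕ) (η : ℝ) : Prop :=
  ∀ X : Matrix (Fin n) (Fin p) ℂ, S X = 0 → X ≠ 0 →
    ∀ X₁ X₂ : Matrix (Fin n) (Fin p) ℂ, X = X₁ + X₂ → X₁.rank ≤ k →
      ∃ H₁ H₂ : Matrix (Fin n) (Fin p) ℂ, X = H₁ + H₂ ∧ H₁.rank ≤ 2 * k ∧
        frobInner H₁ H₂ = 0 ∧ X₁ * H₂ᴴ = 0 ∧ X₁ᴴ * H₂ = 0 ∧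
        nuclearNorm H₁ ≤ η * nuclearNorm H₂

/-- Best `k`-rank approximation error in the nuclear norm, `ρ_k(X)_*`. -/
noncomputable def rhoNuc {n p : ℕ} (k : ℕ) (X : Matrix (Fin n) (Fin p) ℂ) : ℝ :=
  sInf ((fun Z => nuclearNorm (X - Z)) '' {Z : Matrix (Fin n) (Fin p) ℂ | Z.rank ≤ k})

/-- `j^ε(u) = |u|` for `|u| ≥ ε` and `(u² + ε²)/(2ε)` otherwise. -/
noncomputable def jeps (ε u : ℝ) : ℝ :=
  if ε ≤ |u| then |u| else (u ^ 2 + ε ^ 2) / (2 * ε)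

/-- The functional `𝒥_ε(X) = ∑ᵢ j^ε(σᵢ(X))`. -/
noncomputable def Jeps {n p : ℕ} (ε : ℝ) (X : Matrix (Fin n) (Fin p) ℂ) : ℝ :=
  ∑ i : Fin n, jeps ε (sv X (i : ℕ))

/-- `(X^ℓ, W^ℓ, ε_ℓ)_ℓ` is an output of the IRLS-M algorithm with measurement map `S`,
data `M`, parameters `γ > 0` and `K`.  Here `X (ℓ+1)` is the weighted least squares
minimizer for the weight `W ℓ`, `ε (ℓ+1) = min (ε ℓ) (γ σ_{K+1}(X^{ℓ+1}))`, and
`W (ℓ+1)` is built from an eigendecomposition of `X^{ℓ+1}(X^{ℓ+1})ᴴ` together with the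
`ε`-stabilization of the singular values.  If `ε` reaches `0` the algorithm stops. -/
structure IsIRLSM {n p m : ℕ} (S : Matrix (Fin n) (Fin p) ℂ →ₗ[ℂ] (Fin m → ℂ))
    (M : Fin m → ℂ) (γ : ℝ) (K : ℕ)
    (X : ℕ → Matrix (Fin n) (Fin p) ℂ)
    (W : ℕ → Matrix (Fin n) (Fin n) ℂ)
    (ε : ℕ → ℝ) : Prop where
  w_init : W 0 = 1
  eps_init : ε 0 = 1
  x_feasible : ∀ ℓ : ℕ, ε ℓ ≠ 0 → S (X (ℓ + 1)) = M
  x_min : ∀ ℓ : ℕ, ε ℓ ≠ 0 → ∀ Y : Matrix (Fin n) (Fin p) ℂ, S Y = M →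
    frobNorm (matSqrt (W ℓ) * X (ℓ + 1)) ^ 2 ≤ frobNorm (matSqrt (W ℓ) * Y) ^ 2
  eps_update : ∀ ℓ : ℕ, ε ℓ ≠ 0 → ε (ℓ + 1) = min (ε ℓ) (γ * sv (X (ℓ + 1)) K)
  w_update : ∀ ℓ : ℕ, ε ℓ ≠ 0 → ε (ℓ + 1) ≠ 0 →
    ∃ U : Matrix (Fin n) (Fin n) ℂ, U * Uᴴ = 1 ∧ Uᴴ * U = 1 ∧
      X (ℓ + 1) * (X (ℓ + 1))ᴴ =
        U * Matrix.diagonal (fun i : Fin n => ((sv (X (ℓ + 1)) (i : ℕ) : ℂ)) ^ 2) * Uᴴ ∧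
      W (ℓ + 1) =
        U * Matrix.diagonal
            (fun i : Fin n => (((max (sv (X (ℓ + 1)) (i : ℕ)) (ε (ℓ + 1)) : ℝ) : ℂ))⁻¹) * Uᴴ
  w_stop : ∀ ℓ : ℕ, ε ℓ ≠ 0 → ε (ℓ + 1) = 0 → W (ℓ + 1) = W ℓ
  stopped : ∀ ℓ : ℕ, ε ℓ = 0 → X (ℓ + 1) = X ℓ ∧ W (ℓ + 1) = W ℓ ∧ ε (ℓ + 1) = 0

/-! `W` and `XXᴴ` are diagonalised by the same unitary `U`, so
`𝒥(X,W) = ½ Re tr (W XXᴴ) + ½ Re tr W⁻¹ = ∑ᵢ (σᵢ² / wᵢ + wᵢ) / 2` with `wᵢ = max σᵢ ε`,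
and each summand is `j^ε(σᵢ)`. The only facts needed about `matSqrt W` are that it is Hermitian
and squares to `W`; both follow from identifying it with the square root `CFC.sqrt W` of the
continuous functional calculus. -/

lemma sv_nonneg {n p : ℕ} (X : Matrix (Fin n) (Fin p) ℂ) (i : ℕ) : 0 ≤ sv X i := by
  rw [sv, List.getD_eq_getElem?_getD]
  cases hi : (List.mergeSort _ _)[i]? with
  | none => exact le_rfl
  | some x =>
    obtain ⟨j, rfl⟩ := List.mem_ofFn.mp
      ((List.mergeSort_perm _ _).mem_iff.mp (List.mem_of_getElem? hi))
    exact Real.sqrt_nonneg _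

lemma frobNorm_sq_eq_re_trace {n p : ℕ} (A : Matrix (Fin n) (Fin p) ℂ) :
    frobNorm A ^ 2 = (trace (A * Aᴴ)).re := by
  rw [frobNorm, Real.sq_sqrt (Finset.sum_nonneg fun i _ => Finset.sum_nonneg fun j _ =>
    Complex.normSq_nonneg (A i j))]
  simp [trace, mul_apply, Complex.mul_conj]

section MatSqrt

open scoped MatrixOrder

lemma matSqrt_eq_sqrt {n : ℕ} {W : Matrix (Fin n) (Fin n) ℂ} (hW : W.PosSemidef) :
    matSqrt W = CFC.sqrt W := by
  rw [CFC.sqrt_eq_cfc, cfc_nnreal_eq_real _ W, hW.1.cfc_eq, IsHermitian.cfc, matSqrt, dif_pos hW,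
    Unitary.conjStarAlgAut_apply]
  congr 3
  funext i
  simp [max_eq_left (hW.eigenvalues_nonneg i)]

lemma matSqrt_mul_self {n : ℕ} {W : Matrix (Fin n) (Fin n) ℂ} (hW : W.PosSemidef) :
    matSqrt W * matSqrt W = W := by
  rw [matSqrt_eq_sqrt hW, CFC.sqrt_mul_sqrt_self W hW.nonneg]

lemma conjTranspose_matSqrt {n : ℕ} {W : Matrix (Fin n) (Fin n) ℂ} (hW : W.PosSemidef) :
    (matSqrt W)ᴴ = matSqrt W := by
  rw [matSqrt_eq_sqrt hW]
  exact (CFC.sqrt_nonneg W).posSemidef.1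

end MatSqrt

lemma frobNorm_sq_matSqrt_mul {n p : ℕ} {W : Matrix (Fin n) (Fin n) ℂ} (hW : W.PosSemidef)
    (X : Matrix (Fin n) (Fin p) ℂ) :
    frobNorm (matSqrt W * X) ^ 2 = (trace (W * (X * Xᴴ))).re := by
  rw [frobNorm_sq_eq_re_trace, conjTranspose_mul, conjTranspose_matSqrt hW,
    show matSqrt W * X * (Xᴴ * matSqrt W) = matSqrt W * (X * Xᴴ) * matSqrt W by
      simp only [Matrix.mul_assoc],
    trace_mul_cycle, matSqrt_mul_self hW]

lemma frobNorm_sq_matSqrt {n : ℕ} {W : Matrix (Fin n) (Fin n) ℂ} (hW : W.PosSemidef) :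
    frobNorm (matSqrt W) ^ 2 = (trace W).re := by
  rw [← Matrix.mul_one (matSqrt W), frobNorm_sq_matSqrt_mul hW, conjTranspose_one,
    Matrix.mul_one, Matrix.mul_one]

section UnitaryConjugation

variable {ι : Type*} [Fintype ι] [DecidableEq ι] {U : Matrix ι ι ℂ}

lemma unitary_conj_mul_conj (hU : Uᴴ * U = 1) (A B : Matrix ι ι ℂ) :
    (U * A * Uᴴ) * (U * B * Uᴴ) = U * (A * B) * Uᴴ := by
  simp only [Matrix.mul_assoc, ← Matrix.mul_assoc Uᴴ U, hU, Matrix.one_mul]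

lemma trace_unitary_conj (hU : Uᴴ * U = 1) (A : Matrix ι ι ℂ) :
    trace (U * A * Uᴴ) = trace A := by
  rw [trace_mul_comm, ← Matrix.mul_assoc, hU, Matrix.one_mul]

lemma posSemidef_conj_diagonal {d : ι → ℂ} (hd : ∀ i, 0 ≤ d i) (U : Matrix ι ι ℂ) :
    (U * diagonal d * Uᴴ).PosSemidef :=
  (posSemidef_diagonal_iff.mpr hd).mul_mul_conjTranspose_same U

lemma inv_unitary_conj_diagonal (hU : U * Uᴴ = 1) (hU' : Uᴴ * U = 1) {d : ι → ℂ}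
    (hd : ∀ i, d i ≠ 0) :
    (U * diagonal (fun i => (d i)⁻¹) * Uᴴ)⁻¹ = U * diagonal d * Uᴴ := by
  apply inv_eq_right_inv
  rw [unitary_conj_mul_conj hU', diagonal_mul_diagonal]
  simp only [inv_mul_cancel₀ (hd _), diagonal_one, Matrix.mul_one, hU]

end UnitaryConjugation

lemma Jfun_unitary_conj_diagonal {n p : ℕ} {X : Matrix (Fin n) (Fin p) ℂ}
    {U : Matrix (Fin n) (Fin n) ℂ} (hU : U * Uᴴ = 1) (hU' : Uᴴ * U = 1) {s m : Fin n → ℝ}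
    (hm : ∀ i, 0 < m i)
    (hX : X * Xᴴ = U * diagonal (fun i => (s i : ℂ) ^ 2) * Uᴴ) :
    Jfun X (U * diagonal (fun i => (m i : ℂ)⁻¹) * Uᴴ) =
      ∑ i, (s i ^ 2 / m i + m i) / 2 := by
  have hm_nonneg : ∀ i, (0 : ℂ) ≤ m i := fun i => Complex.zero_le_real.mpr (hm i).le
  have hW := posSemidef_conj_diagonal (fun i => inv_nonneg.mpr (hm_nonneg i)) U
  have hWinv := inv_unitary_conj_diagonal hU hU' (d := fun i => (m i : ℂ))
    (fun i => Complex.ofReal_ne_zero.mpr (hm i).ne')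
  rw [Jfun, hWinv, frobNorm_sq_matSqrt_mul hW,
    frobNorm_sq_matSqrt (posSemidef_conj_diagonal hm_nonneg U), hX, unitary_conj_mul_conj hU',
    trace_unitary_conj hU', trace_unitary_conj hU', diagonal_mul_diagonal, trace_diagonal,
    trace_diagonal, Complex.re_sum, Complex.re_sum, ← Finset.sum_add_distrib,
    Finset.sum_div]
  congr 1 with i
  norm_cast
  rw [inv_mul_eq_div]

/-- `j^ε(u)` is the minimum of `(u² / w + w) / 2` over `w ≥ ε`, attained at `w = max u ε`. -/
lemma jeps_eq_of_nonneg {ε u : ℝ} (hε : 0 < ε) (hu : 0 ≤ u) :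
    jeps ε u = (u ^ 2 / max u ε + max u ε) / 2 := by
  rw [jeps, abs_of_nonneg hu]
  split_ifs with h
  · rw [max_eq_left h]
    field_simp [(hε.trans_le h).ne']
    ring
  · rw [max_eq_right (le_of_not_ge h)]
    field_simp

lemma Jeps_eq_sum_filter {n p : ℕ} (ε : ℝ) (X : Matrix (Fin n) (Fin p) ℂ) :
    Jeps ε X = (∑ i ∈ Finset.univ.filter (fun i : Fin n => ε ≤ sv X i), sv X i) +
      ∑ i ∈ Finset.univ.filter (fun i : Fin n => sv X i < ε),
        (sv X i ^ 2 + ε ^ 2) / (2 * ε) := by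
  rw [Jeps, ← Finset.sum_filter_add_sum_filter_not Finset.univ (fun i : Fin n => ε ≤ sv X i)]
  simp only [not_le]
  congr 1 <;> refine Finset.sum_congr rfl fun i hi => ?_ <;>
    rw [Finset.mem_filter] at hi <;> simp [jeps, abs_of_nonneg (sv_nonneg X i), hi.2]

theorem statement8_general {n p : ℕ} (ε : ℝ) (hε : 0 < ε)
    (X : Matrix (Fin n) (Fin p) ℂ)
    (U : Matrix (Fin n) (Fin n) ℂ) (hU : U * Uᴴ = 1) (hU' : Uᴴ * U = 1)
    (hdecomp : X * Xᴴ =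
      U * Matrix.diagonal (fun i : Fin n => ((sv X (i : ℕ) : ℂ)) ^ 2) * Uᴴ)
    (W : Matrix (Fin n) (Fin n) ℂ)
    (hW : W = U * Matrix.diagonal
        (fun i : Fin n => (((max (sv X (i : ℕ)) ε : ℝ)) : ℂ)⁻¹) * Uᴴ) :
    Jfun X W =
        (∑ i ∈ Finset.univ.filter (fun i : Fin n => ε ≤ sv X (i : ℕ)), sv X (i : ℕ)) +
          ∑ i ∈ Finset.univ.filter (fun i : Fin n => sv X (i : ℕ) < ε),
            ((sv X (i : ℕ)) ^ 2 + ε ^ 2) / (2 * ε) ∧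
      Jfun X W = Jeps ε X := by
  have hJ : Jfun X W = Jeps ε X := by
    subst hW
    rw [Jfun_unitary_conj_diagonal hU hU' (fun i => lt_max_of_lt_right hε) hdecomp, Jeps]
    exact Finset.sum_congr rfl fun i _ => (jeps_eq_of_nonneg hε (sv_nonneg X i)).symm
  exact ⟨hJ.trans (Jeps_eq_sum_filter ε X), hJ⟩

/-- explicit value of `𝒥(X, W)` for the IRLS-M weight matrix:
`𝒥(X,W) = ∑_(σᵢ ≥ ε) σᵢ + ∑_(σᵢ < ε) (σᵢ² + ε²)/(2ε) = 𝒥_ε(X)`. -/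
theorem statement8 {n p : ℕ} (hnp : n ≤ p) (ε : ℝ) (hε : 0 < ε)
    (X : Matrix (Fin n) (Fin p) ℂ)
    (U : Matrix (Fin n) (Fin n) ℂ) (hU : U * Uᴴ = 1) (hU' : Uᴴ * U = 1)
    (hdecomp : X * Xᴴ =
      U * Matrix.diagonal (fun i : Fin n => ((sv X (i : ℕ) : ℂ)) ^ 2) * Uᴴ)
    (W : Matrix (Fin n) (Fin n) ℂ)
    (hW : W = U * Matrix.diagonal
        (fun i : Fin n => (((max (sv X (i : ℕ)) ε : ℝ)) : ℂ)⁻¹) * Uᴴ) :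
    Jfun X W =
        (∑ i ∈ Finset.univ.filter (fun i : Fin n => ε ≤ sv X (i : ℕ)), sv X (i : ℕ)) +
          ∑ i ∈ Finset.univ.filter (fun i : Fin n => sv X (i : ℕ) < ε),
            ((sv X (i : ℕ)) ^ 2 + ε ^ 2) / (2 * ε) ∧
      Jfun X W = Jeps ε X :=
  statement8_general ε hε X U hU hU' hdecomp W hW

end IRLSM
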